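/- Generalized equivalence on ℤ²: for a walk starting at (x_0,y_0) with horizontal initial velocity (v_0 or v_2), the mirror walk on σ_M and rotator walk on σ_R are equivalent if σ_R(x,y) = (-1)^{|x-x_0|+|y-y_0|+1} σ_M(x,y); for vertical initial velocity (v_1 or v_3), they are equivalent if σ_R(x,y) = (-1)^{|x-x_0|+|y-y_0|} σ_M(x,y). -/
import Mathlib


/-- The four unit velocities on the square lattice: v₀=(1,0), v₁=(0,1), v₂=(-1,0), v₃=(0,-1). -/
def sqVel (k : ZMod 4) : ℤ × ℤ :=
  if k = 0 then (1, 0) else if k = 1 then (0, 1) else if k = 2 then (-1, 0) else (0, -1)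

/-- The mirror scattering rule M on ℤ² (Table 1). -/
def sqM (k : ZMod 4) (σ : ℤ) : ZMod 4 :=
  if σ = 1 then
    (if k = 0 then 1 else if k = 1 then 0 else if k = 2 then 3 else 2)
  else
    (if k = 0 then 3 else if k = 1 then 2 else if k = 2 then 1 else 0)

/-- The rotator scattering rule R on ℤ²: k ↦ (k - σ) mod 4. -/
def sqR (k : ZMod 4) (σ : ℤ) : ZMod 4 := k - (σ : ZMod 4)

/-- State of a walk on ℤ²: position, velocity index, environment of scatterers. -/
structure SqState where
  pos : ℤ × ℤ
  vel : ZMod 4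
  env : ℤ × ℤ → ℤ

/-- One step of the flipping dynamics with scattering rule `f`:
the walker is scattered at its current site, moves one step in the new direction,
and the scatterer at the old site flips sign. -/
def sqStep (f : ZMod 4 → ℤ → ZMod 4) (s : SqState) : SqState :=
  let k' := f s.vel (s.env s.pos)
  { pos := s.pos + sqVel k', vel := k',
    env := fun q => if q = s.pos then -s.env s.pos else s.env q }

/-- The walk: state after `t` time steps. -/
def sqWalk (f : ZMod 4 → ℤ → ZMod 4) (s₀ : SqState) (t : ℕ) : SqState :=
  (sqStep f)^[t] s₀

/-! Auxiliary machinery -/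

def sqEps (x₀ y₀ : ℤ) (p : ℤ × ℤ) : ℤ :=
  (-1) ^ ((p.1 - x₀).natAbs + (p.2 - y₀).natAbs)

def sqHsign (k : ZMod 4) : ℤ := if k = 0 ∨ k = 2 then -1 else 1

lemma zmod4_cases (k : ZMod 4) : k = 0 ∨ k = 1 ∨ k = 2 ∨ k = 3 := by revert k; decide

lemma negOne_pow_natAbs_flip {a b : ℤ} (h : a - b = 1 ∨ a - b = -1) :
    (-1 : ℤ) ^ a.natAbs = -(-1 : ℤ) ^ b.natAbs := by
  have hodd : ¬ Even (a - b) := by rcases h with h | h <;> rw [h] <;> decide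
  rcases Int.even_or_odd b with hb | hb
  · have ha : Odd a := by
      rcases Int.even_or_odd a with ha | ha
      · exact absurd (Int.even_sub.mpr ⟨fun _ => hb, fun _ => ha⟩) hodd
      · exact ha
    rw [Odd.neg_one_pow (Int.natAbs_odd.mpr ha), Even.neg_one_pow (Int.natAbs_even.mpr hb)]
  · have ha : Even a := by
      rcases Int.even_or_odd a with ha | ha
      · exact ha
      · exact absurd (Int.even_sub.mpr ⟨fun h' => absurd h' (Int.not_even_iff_odd.mpr ha),
          fun h' => absurd h' (Int.not_even_iff_odd.mpr hb)⟩) hodd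
    rw [Even.neg_one_pow (Int.natAbs_even.mpr ha), Odd.neg_one_pow (Int.natAbs_odd.mpr hb)]
    norm_num

lemma sqEps_mul_self (x₀ y₀ : ℤ) (p : ℤ × ℤ) : sqEps x₀ y₀ p * sqEps x₀ y₀ p = 1 := by
  unfold sqEps
  rw [← pow_add]
  exact Even.neg_one_pow ⟨_, rfl⟩

lemma sqEps_step (x₀ y₀ : ℤ) (p : ℤ × ℤ) (k : ZMod 4) :
    sqEps x₀ y₀ (p + sqVel k) = - sqEps x₀ y₀ p := by
  rcases zmod4_cases k with hk | hk | hk | hk <;> subst hk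
  · rw [show sqVel 0 = ((1:ℤ), (0:ℤ)) from rfl]
    simp only [sqEps, Prod.fst_add, Prod.snd_add, pow_add]
    rw [negOne_pow_natAbs_flip (a := p.1 + 1 - x₀) (b := p.1 - x₀) (by left; ring)]
    simp only [add_zero]; ring
  · rw [show sqVel 1 = ((0:ℤ), (1:ℤ)) from rfl]
    simp only [sqEps, Prod.fst_add, Prod.snd_add, pow_add]
    rw [negOne_pow_natAbs_flip (a := p.2 + 1 - y₀) (b := p.2 - y₀) (by left; ring)]
    simp only [add_zero]; ring
  · rw [show sqVel 2 = ((-1:ℤ), (0:ℤ)) from rfl]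
    simp only [sqEps, Prod.fst_add, Prod.snd_add, pow_add]
    rw [negOne_pow_natAbs_flip (a := p.1 + -1 - x₀) (b := p.1 - x₀) (by right; ring)]
    simp only [add_zero]; ring
  · rw [show sqVel 3 = ((0:ℤ), (-1:ℤ)) from rfl]
    simp only [sqEps, Prod.fst_add, Prod.snd_add, pow_add]
    rw [negOne_pow_natAbs_flip (a := p.2 + -1 - y₀) (b := p.2 - y₀) (by right; ring)]
    simp only [add_zero]; ring

lemma sqVel_eq (k : ZMod 4) (σ : ℤ) (hσ : σ = 1 ∨ σ = -1) :
    sqR k (sqHsign k * σ) = sqM k σ := by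
  rcases hσ with h | h <;> subst h <;>
    rcases zmod4_cases k with hk | hk | hk | hk <;> subst hk <;>
      decide

lemma sqHsign_flip (k : ZMod 4) (σ : ℤ) (hσ : σ = 1 ∨ σ = -1) :
    sqHsign (sqM k σ) = - sqHsign k := by
  rcases hσ with h | h <;> subst h <;>
    rcases zmod4_cases k with hk | hk | hk | hk <;> subst hk <;> decide

def SqInv (x₀ y₀ : ℤ) (s s' : SqState) : Prop :=
  s.pos = s'.pos ∧ s.vel = s'.vel ∧ (∀ p, s.env p = 1 ∨ s.env p = -1) ∧
    ∀ p, s'.env p = sqEps x₀ y₀ p * sqEps x₀ y₀ s.pos * sqHsign s.vel * s.env p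

lemma SqInv_step {x₀ y₀ : ℤ} {s s' : SqState} (h : SqInv x₀ y₀ s s') :
    SqInv x₀ y₀ (sqStep sqM s) (sqStep sqR s') := by
  obtain ⟨hp, hv, hpm, hrel⟩ := h
  have hσ := hpm s.pos
  have henv' : s'.env s'.pos = sqHsign s.vel * s.env s.pos := by
    rw [← hp, hrel s.pos, sqEps_mul_self, one_mul]
  have hvel : sqR s'.vel (s'.env s'.pos) = sqM s.vel (s.env s.pos) := by
    rw [henv', ← hv, sqVel_eq _ _ hσ]
  refine ⟨?_, ?_, ?_, ?_⟩
  · simp only [sqStep, hvel, hp]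
  · simp only [sqStep, hvel]
  · intro p
    simp only [sqStep]
    split
    · rcases hσ with h | h <;> rw [h] <;> simp
    · exact hpm p
  · intro p
    simp only [sqStep, hvel, ← hp]
    have heps := sqEps_step x₀ y₀ s.pos (sqM s.vel (s.env s.pos))
    have hflip := sqHsign_flip s.vel (s.env s.pos) hσ
    rw [heps, hflip]
    by_cases hps : p = s.pos
    · simp only [hps, if_true]
      rw [hrel s.pos]; ring
    · simp only [hps, if_false]
      rw [hrel p]; ring

lemma SqInv_walk {x₀ y₀ : ℤ} {s s' : SqState} (h : SqInv x₀ y₀ s s') (t : ℕ) :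
    SqInv x₀ y₀ (sqWalk sqM s t) (sqWalk sqR s' t) := by
  induction t with
  | zero => exact h
  | succ n ih =>
    rw [sqWalk, sqWalk, Function.iterate_succ_apply', Function.iterate_succ_apply']
    exact SqInv_step ih


/-- generalized equivalence on ℤ² for an arbitrary starting point
(x₀,y₀): with horizontal initial velocity the walks are equivalent when
σ_R(x,y) = (-1)^{|x-x₀|+|y-y₀|+1} σ_M(x,y), and with vertical initial velocity
when σ_R(x,y) = (-1)^{|x-x₀|+|y-y₀|} σ_M(x,y). -/
theorem sq_equivalence_general (x₀ y₀ : ℤ) (σM σR : ℤ × ℤ → ℤ)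
    (hσ : ∀ p, σM p = 1 ∨ σM p = -1) :
    ((∀ p : ℤ × ℤ, σR p = (-1) ^ ((p.1 - x₀).natAbs + (p.2 - y₀).natAbs + 1) * σM p) →
      ∀ k₀ : ZMod 4, (k₀ = 0 ∨ k₀ = 2) → ∀ t : ℕ,
        (sqWalk sqM ⟨(x₀, y₀), k₀, σM⟩ t).pos = (sqWalk sqR ⟨(x₀, y₀), k₀, σR⟩ t).pos) ∧
    ((∀ p : ℤ × ℤ, σR p = (-1) ^ ((p.1 - x₀).natAbs + (p.2 - y₀).natAbs) * σM p) →
      ∀ k₀ : ZMod 4, (k₀ = 1 ∨ k₀ = 3) → ∀ t : ℕ,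
        (sqWalk sqM ⟨(x₀, y₀), k₀, σM⟩ t).pos = (sqWalk sqR ⟨(x₀, y₀), k₀, σR⟩ t).pos) := by
  have heps0 : sqEps x₀ y₀ (x₀, y₀) = 1 := by simp [sqEps]
  constructor
  · intro hR k₀ hk₀ t
    have hinv : SqInv x₀ y₀ ⟨(x₀, y₀), k₀, σM⟩ ⟨(x₀, y₀), k₀, σR⟩ := by
      refine ⟨rfl, rfl, hσ, fun p => ?_⟩
      have hhs : sqHsign k₀ = -1 := by
        rcases hk₀ with h | h <;> subst h <;> simp [sqHsign]
      show σR p = sqEps x₀ y₀ p * sqEps x₀ y₀ (x₀, y₀) * sqHsign k₀ * σM p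
      rw [heps0, hhs, hR p, pow_succ]
      unfold sqEps; ring
    exact (SqInv_walk hinv t).1
  · intro hR k₀ hk₀ t
    have hinv : SqInv x₀ y₀ ⟨(x₀, y₀), k₀, σM⟩ ⟨(x₀, y₀), k₀, σR⟩ := by
      refine ⟨rfl, rfl, hσ, fun p => ?_⟩
      have hhs : sqHsign k₀ = 1 := by
        rcases hk₀ with h | h <;> subst h <;> simp [sqHsign] <;> decide
      show σR p = sqEps x₀ y₀ p * sqEps x₀ y₀ (x₀, y₀) * sqHsign k₀ * σM p
      rw [heps0, hhs, hR p]
      unfold sqEps; ring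
    exact (SqInv_walk hinv t).1
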